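/- Let T be a stress-energy tensor on (N+1)-dimensional Minkowski space satisfying the weakened stable dominant energy condition, and suppose T ≠ 0. Then for every future-directed lightlike vector n, one has T(n,n) > 0 (in particular T(n,n) ≠ 0). -/

import Mathlib

open Matrix

/-- The Minkowski metric `diag(-1,1,…,1)` on `ℝ^{N+1}`. -/
noncomputable def eta (N : ℕ) : Matrix (Fin (N+1)) (Fin (N+1)) ℝ :=
  Matrix.diagonal (fun i => if i = 0 then (-1 : ℝ) else 1)

/-- The Minkowski bilinear form `η(x,y) = -x₀y₀ + ∑ᵢ xᵢyᵢ`. -/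
noncomputable def mdot {N : ℕ} (x y : Fin (N+1) → ℝ) : ℝ :=
  x ⬝ᵥ (eta N).mulVec y

/-- Future-directed timelike: `η(v,v) < 0` and `v₀ > 0`. -/
def FDTimelike {N : ℕ} (v : Fin (N+1) → ℝ) : Prop :=
  mdot v v < 0 ∧ 0 < v 0

/-- Future-directed lightlike: `v ≠ 0`, `η(v,v) = 0` and `v₀ > 0`. -/
def FDLightlike {N : ℕ} (v : Fin (N+1) → ℝ) : Prop :=
  v ≠ 0 ∧ mdot v v = 0 ∧ 0 < v 0

/-- Future-directed causal: future-directed timelike or lightlike. -/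
def FDCausal {N : ℕ} (v : Fin (N+1) → ℝ) : Prop :=
  FDTimelike v ∨ FDLightlike v

/-- The bilinear form associated to a matrix: `T(v,w) = vᵀ T w`. -/
noncomputable def Tbil {N : ℕ} (T : Matrix (Fin (N+1)) (Fin (N+1)) ℝ)
    (v w : Fin (N+1) → ℝ) : ℝ :=
  v ⬝ᵥ T.mulVec w

/-- The endomorphism associated to a stress-energy tensor: `u(v) = -ηTv`. -/
noncomputable def endo {N : ℕ} (T : Matrix (Fin (N+1)) (Fin (N+1)) ℝ)
    (v : Fin (N+1) → ℝ) : Fin (N+1) → ℝ :=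
  -((eta N).mulVec (T.mulVec v))

/-- The dominant energy condition: every future-directed causal vector is
sent by the associated endomorphism to a future-directed causal vector or zero. -/
def DEC {N : ℕ} (T : Matrix (Fin (N+1)) (Fin (N+1)) ℝ) : Prop :=
  ∀ v : Fin (N+1) → ℝ, FDCausal v → FDCausal (endo T v) ∨ endo T v = 0

/-! If `u(n)` is timelike, the reverse Cauchy–Schwarz inequality gives
`T(n,n) = -η(u(n), n) > 0`. Otherwise `Tn = 0`, and then for timelike `v` symmetry gives
`η(u(v), n) = -T(v,n) = 0`, which rules out `u(v)` timelike; hence `Tv = 0`. The future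
timelike cone is a nonempty open set, so it spans and `T = 0`. -/

lemma eta_mul_eta (N : ℕ) : eta N * eta N = 1 := by
  rw [eta, diagonal_mul_diagonal, ← diagonal_one]
  congr 1
  funext i
  split_ifs <;> norm_num

lemma eta_transpose (N : ℕ) : (eta N)ᵀ = eta N :=
  diagonal_transpose _

lemma mdot_eq_neg_time_add_space {N : ℕ} (x y : Fin (N+1) → ℝ) :
    mdot x y = -(x 0 * y 0) + ∑ i : Fin N, x i.succ * y i.succ := by
  simp [mdot, eta, dotProduct, mulVec_diagonal, Fin.sum_univ_succ, Fin.succ_ne_zero]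

lemma mdot_endo {N : ℕ} (T : Matrix (Fin (N+1)) (Fin (N+1)) ℝ) (v w : Fin (N+1) → ℝ) :
    mdot (endo T v) w = -Tbil T w v := by
  rw [mdot, endo, Tbil, neg_dotProduct, dotProduct_mulVec, vecMul_mulVec, ← mulVec_transpose,
    transpose_mul, transpose_transpose, eta_transpose, eta_mul_eta, one_mulVec, dotProduct_comm]

lemma endo_eq_zero_iff {N : ℕ} {T : Matrix (Fin (N+1)) (Fin (N+1)) ℝ} {v : Fin (N+1) → ℝ} :
    endo T v = 0 ↔ T *ᵥ v = 0 := by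
  rw [endo, neg_eq_zero]
  refine ⟨fun h => ?_, fun h => by rw [h, mulVec_zero]⟩
  rw [← one_mulVec (T *ᵥ v), ← eta_mul_eta, ← mulVec_mulVec, h, mulVec_zero]

lemma isOpen_setOf_fdTimelike (N : ℕ) : IsOpen {v : Fin (N+1) → ℝ | FDTimelike v} := by
  have hcont : Continuous fun v : Fin (N+1) → ℝ => mdot v v :=
    continuous_id.dotProduct (continuous_const.matrix_mulVec continuous_id)
  exact (isOpen_lt hcont continuous_const).inter (isOpen_lt continuous_const (continuous_apply 0))

lemma fdTimelike_single_zero (N : ℕ) : FDTimelike (Pi.single 0 1 : Fin (N+1) → ℝ) := by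
  simp [FDTimelike, mdot_eq_neg_time_add_space, Fin.succ_ne_zero]

lemma eq_zero_of_forall_fdTimelike_mulVec_eq_zero {N : ℕ} {T : Matrix (Fin (N+1)) (Fin (N+1)) ℝ}
    (h : ∀ v, FDTimelike v → T *ᵥ v = 0) : T = 0 := by
  have hker : LinearMap.ker T.mulVecLin = ⊤ := by
    refine Submodule.eq_top_of_nonempty_interior' _ ⟨Pi.single 0 1, ?_⟩
    refine mem_interior.2 ⟨_, fun v hv => h v hv, isOpen_setOf_fdTimelike N, ?_⟩
    exact fdTimelike_single_zero N
  rw [ext_iff_mulVec]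
  intro v
  simpa using (LinearMap.ext_iff.1 (LinearMap.ker_eq_top.1 hker) v)

lemma tbil_comm {N : ℕ} {T : Matrix (Fin (N+1)) (Fin (N+1)) ℝ} (hsymm : T.IsSymm)
    (v w : Fin (N+1) → ℝ) : Tbil T v w = Tbil T w v := by
  rw [Tbil, Tbil, dotProduct_mulVec, ← mulVec_transpose, hsymm.eq, dotProduct_comm]

-- Reverse Cauchy–Schwarz inequality.
lemma mdot_neg_of_fdTimelike {N : ℕ} {t n : Fin (N+1) → ℝ} (ht : FDTimelike t)
    (hnn : mdot n n ≤ 0) (hn0 : 0 < n 0) : mdot t n < 0 := by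
  obtain ⟨htt, ht0⟩ := ht
  have hcs :=
    Finset.sum_mul_sq_le_sq_mul_sq Finset.univ (fun i : Fin N => t i.succ) (fun i => n i.succ)
  simp only [sq] at hcs
  rw [mdot_eq_neg_time_add_space] at htt hnn ⊢
  set S := ∑ i : Fin N, t i.succ * n i.succ
  set A := ∑ i : Fin N, t i.succ * t i.succ
  set B := ∑ i : Fin N, n i.succ * n i.succ
  have hA : 0 ≤ A := Finset.sum_nonneg fun i _ => mul_self_nonneg _
  have hS : S ^ 2 < (t 0 * n 0) ^ 2 := calc
    S ^ 2 ≤ A * B := (sq S).trans_le hcs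
    _ ≤ A * (n 0 * n 0) := by gcongr; linarith
    _ < (t 0 * t 0) * (n 0 * n 0) := by gcongr; linarith
    _ = (t 0 * n 0) ^ 2 := by ring
  linarith [le_abs_self S, abs_lt_of_sq_lt_sq hS (mul_pos ht0 hn0).le]

lemma tbil_pos_of_fdTimelike_endo {N : ℕ} {T : Matrix (Fin (N+1)) (Fin (N+1)) ℝ}
    {n : Fin (N+1) → ℝ} (hu : FDTimelike (endo T n)) (hnn : mdot n n ≤ 0) (hn0 : 0 < n 0) :
    0 < Tbil T n n := by
  have h := mdot_neg_of_fdTimelike hu hnn hn0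
  rw [mdot_endo] at h
  linarith

lemma mulVec_eq_zero_of_mulVec_causal_eq_zero {N : ℕ} {T : Matrix (Fin (N+1)) (Fin (N+1)) ℝ}
    (hsymm : T.IsSymm) {n v : Fin (N+1) → ℝ} (hnn : mdot n n ≤ 0) (hn0 : 0 < n 0)
    (hTn : T *ᵥ n = 0) (hv : FDTimelike (endo T v) ∨ endo T v = 0) : T *ᵥ v = 0 := by
  refine hv.elim (fun hu => absurd (mdot_neg_of_fdTimelike hu hnn hn0) ?_) endo_eq_zero_iff.1
  rw [mdot_endo, tbil_comm hsymm, Tbil, hTn, dotProduct_zero, neg_zero]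
  exact lt_irrefl 0

theorem wsdec_null_positive_general {N : ℕ}
    (T : Matrix (Fin (N+1)) (Fin (N+1)) ℝ) (hsymm : T.IsSymm)
    (hwsdec : ∀ v : Fin (N+1) → ℝ, FDCausal v →
      FDTimelike (endo T v) ∨ endo T v = 0)
    (hT : T ≠ 0) :
    ∀ n : Fin (N+1) → ℝ, FDLightlike n → 0 < Tbil T n n := by
  intro n hn
  have hnn : mdot n n ≤ 0 := hn.2.1.le
  rcases hwsdec n (Or.inr hn) with hu | hu
  · exact tbil_pos_of_fdTimelike_endo hu hnn hn.2.2
  · refine absurd (eq_zero_of_forall_fdTimelike_mulVec_eq_zero fun v hv => ?_) hT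
    exact mulVec_eq_zero_of_mulVec_causal_eq_zero hsymm hnn hn.2.2 (endo_eq_zero_iff.1 hu)
      (hwsdec v (Or.inl hv))

/-- Under the weakened stable dominant energy condition, if `T ≠ 0` then
`T(n,n) > 0` for every future-directed lightlike vector `n`. -/
theorem wsdec_null_positive {N : ℕ} (hN : 1 ≤ N)
    (T : Matrix (Fin (N+1)) (Fin (N+1)) ℝ) (hsymm : T.IsSymm)
    (hwsdec : ∀ v : Fin (N+1) → ℝ, FDCausal v →
      FDTimelike (endo T v) ∨ endo T v = 0)
    (hT : T ≠ 0) :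
    ∀ n : Fin (N+1) → ℝ, FDLightlike n → 0 < Tbil T n n :=
  wsdec_null_positive_general T hsymm hwsdec hT
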